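/- arXiv:1202.4350 — 3 statements merged into one kernel-verified Lean document; each statement's English description precedes it below -/
import Mathlib

section
/- Let G be a topological group, let m be a finite Radon measure on G, and let F be an equi-LUC subset of LUC(G). Then the restriction to F of the functional f ↦ ∫ f dm is continuous in the topology of pointwise convergence on G. -/
noncomputable section
set_option linter.unusedSectionVars false

open Filter Topology MeasureTheory BoundedContinuousFunction

section Defs

variable (G : Type*) [Group G] [TopologicalSpace G] [IsTopologicalGroup G]

/-- A bounded left uniformly continuous function on a topological group. -/
def IsLUCFun (f : G → ℂ) : Prop :=
  (∃ C, ∀ s, ‖f s‖ ≤ C) ∧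
    ∀ ε > 0, ∃ U ∈ 𝓝 (1 : G), ∀ s t : G, s * t⁻¹ ∈ U → ‖f s - f t‖ < ε

/-- A set of functions is equi-LUC if it is uniformly bounded in the sup norm and
equi-uniformly continuous for the right uniformity. -/
def EquiLUCFun (F : Set (G → ℂ)) : Prop :=
  (∃ C, ∀ f ∈ F, ∀ s, ‖f s‖ ≤ C) ∧
    ∀ ε > 0, ∃ U ∈ 𝓝 (1 : G), ∀ f ∈ F, ∀ s t : G, s * t⁻¹ ∈ U → ‖f s - f t‖ < ε

/-- A SIN group: there is a base of neighbourhoods of the identity that are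
invariant under all inner automorphisms. -/
def IsSIN : Prop :=
  ∀ U ∈ 𝓝 (1 : G), ∃ V ∈ 𝓝 (1 : G), V ⊆ U ∧ ∀ x : G, ∀ v ∈ V, x * v * x⁻¹ ∈ V

end Defs

/-
On a compact set `K`, pointwise convergence on an equicontinuous family is uniform convergence
(Ascoli), so `f ↦ ∫_K f dμ` is continuous on `F` for the pointwise topology. By inner regularity,
`K` can be chosen with `μ Kᶜ` small, and the uniform bound on `F` makes `f ↦ ∫ f dμ` a uniform
limit on `F` of such functionals, hence continuous.
-/

section Integral

variable {X E : Type*} [MeasurableSpace X] [NormedAddCommGroup E] [NormedSpace ℝ E]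

theorem TendstoUniformlyOn.tendsto_setIntegral {μ : Measure X} {ι : Type*} {l : Filter ι}
    {F : ι → X → E} {f : X → E} {s : Set X} (h : TendstoUniformlyOn F f l s) (hμs : μ s ≠ ⊤)
    (hF : ∀ i, IntegrableOn (F i) s μ) (hf : IntegrableOn f s μ) :
    Tendsto (fun i => ∫ x in s, F i x ∂μ) l (𝓝 (∫ x in s, f x ∂μ)) := by
  rw [Metric.tendsto_nhds]
  intro ε hε
  have hδ : 0 < ε / (μ.real s + 1) := by positivity
  filter_upwards [Metric.tendstoUniformlyOn_iff.1 h _ hδ] with i hi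
  have hbound : ∀ x ∈ s, ‖F i x - f x‖ ≤ ε / (μ.real s + 1) := fun x hx => by
    rw [← dist_eq_norm, dist_comm]
    exact (hi x hx).le
  calc dist (∫ x in s, F i x ∂μ) (∫ x in s, f x ∂μ)
      = ‖∫ x in s, (F i x - f x) ∂μ‖ := by rw [dist_eq_norm, integral_sub (hF i) hf]
    _ ≤ ε / (μ.real s + 1) * μ.real s := norm_setIntegral_le_of_norm_le_const hμs.lt_top hbound
    _ < ε := by
      rw [div_mul_eq_mul_div, div_lt_iff₀ (by positivity)]
      nlinarith [measureReal_nonneg (μ := μ) (s := s)]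

variable [TopologicalSpace X]

theorem EquicontinuousOn.continuous_setIntegral {μ : Measure X} {ι : Type*} [TopologicalSpace ι]
    {F : ι → X → E} {K : Set X} (hF : EquicontinuousOn F K) (hFc : Continuous F)
    (hK : IsCompact K) (hμK : μ K ≠ ⊤) (hint : ∀ i, IntegrableOn (F i) K μ) :
    Continuous fun i => ∫ x in K, F i x ∂μ := by
  rw [continuous_iff_continuousAt]
  intro i₀
  have hpi : Tendsto ((⋃₀ {K}).domRestrict ∘ F) (𝓝 i₀) (𝓝 ((⋃₀ {K}).domRestrict (F i₀))) :=
    ((continuous_pi fun x : ⋃₀ {K} => continuous_apply (x : X)).tendsto _).comp (hFc.tendsto i₀)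
  have hunif : TendstoUniformlyOn F (F i₀) (𝓝 i₀) K :=
    UniformOnFun.tendsto_iff_tendstoUniformlyOn.1
      ((EquicontinuousOn.tendsto_uniformOnFun_iff_pi' (by simpa using hK) (by simpa using hF)
        (𝓝 i₀) (F i₀)).2 hpi) K rfl
  exact hunif.tendsto_setIntegral hμK hint (hint i₀)

-- Closedness makes `K` measurable; without `T2Space` a compact set need not be.
theorem exists_isCompact_isClosed_measureReal_compl_lt [R1Space X] [BorelSpace X] (μ : Measure X)
    [IsFiniteMeasure μ] [μ.InnerRegular] {ε : ℝ} (hε : 0 < ε) :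
    ∃ K, IsCompact K ∧ IsClosed K ∧ μ.real Kᶜ < ε := by
  obtain ⟨K, -, hK, hKc, hμK⟩ := MeasurableSet.univ.exists_isCompact_isClosed_lt_add
    (measure_ne_top μ _) (ENNReal.ofReal_pos.2 hε).ne'
  refine ⟨K, hK, hKc, ENNReal.toReal_lt_of_lt_ofReal ?_⟩
  rw [Set.compl_eq_univ_sdiff]
  exact measure_sdiff_lt_of_lt_add hKc.measurableSet.nullMeasurableSet (Set.subset_univ K)
    (measure_ne_top μ K) hμK

theorem exists_isCompact_forall_norm_integral_sub_setIntegral_lt [R1Space X] [BorelSpace X]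
    (μ : Measure X) [IsFiniteMeasure μ] [μ.InnerRegular] {F : Set (X → E)} {C : ℝ}
    (hC : ∀ f ∈ F, ∀ x, ‖f x‖ ≤ C) (hint : ∀ f ∈ F, Integrable f μ) {ε : ℝ} (hε : 0 < ε) :
    ∃ K, IsCompact K ∧ ∀ f ∈ F, ‖∫ x, f x ∂μ - ∫ x in K, f x ∂μ‖ < ε := by
  obtain ⟨K, hK, hKc, hμK⟩ :=
    exists_isCompact_isClosed_measureReal_compl_lt μ (ε := ε / (|C| + 1)) (by positivity)
  refine ⟨K, hK, fun f hf => ?_⟩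
  calc ‖∫ x, f x ∂μ - ∫ x in K, f x ∂μ‖
      ≤ μ.real Kᶜ * C := norm_integral_sub_setIntegral_le (ae_of_all _ (hC f hf))
        hKc.measurableSet (hint f hf)
    _ ≤ μ.real Kᶜ * (|C| + 1) := by gcongr; linarith [le_abs_self C]
    _ < ε := by rwa [← lt_div_iff₀ (by positivity)]

end Integral

section EquiLUC

variable {G : Type*} [Group G] [TopologicalSpace G] [IsTopologicalGroup G] {F : Set (G → ℂ)}

theorem EquiLUCFun.equicontinuous (hF : EquiLUCFun G F) : Equicontinuous ((↑) : F → G → ℂ) := by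
  intro t
  rw [Metric.equicontinuousAt_iff_right]
  intro ε hε
  obtain ⟨U, hU, hUF⟩ := hF.2 ε hε
  filter_upwards [(continuous_mul_const t⁻¹).tendsto' t 1 (mul_inv_cancel t) hU] with s hs f
  rw [dist_comm, Complex.dist_eq]
  exact hUF f f.2 s t hs

theorem EquiLUCFun.integrable [MeasurableSpace G] [OpensMeasurableSpace G] (μ : Measure G)
    [IsFiniteMeasure μ] (hF : EquiLUCFun G F) {f : G → ℂ} (hf : f ∈ F) : Integrable f μ :=
  let ⟨C, hC⟩ := hF.1
  .of_bound (hF.equicontinuous.continuous ⟨f, hf⟩).aestronglyMeasurable C (ae_of_all _ (hC f hf))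

end EquiLUC

/-- **Lemma (paper Lemma 5.1).** For a finite Radon measure `μ` on a topological
group `G` and an equi-LUC set `F`, the functional `f ↦ ∫ f dμ` restricted to `F` is
continuous in the topology of pointwise convergence on `G`. -/
theorem integral_continuous_on_equiLUC_pointwise
    (G : Type*) [Group G] [TopologicalSpace G] [IsTopologicalGroup G]
    [MeasurableSpace G] [BorelSpace G]
    (μ : Measure G) [IsFiniteMeasure μ] [μ.InnerRegular]
    (F : Set (G → ℂ)) (hF : EquiLUCFun G F) :
    Continuous (fun f : F => ∫ x, (f : G → ℂ) x ∂μ) := by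
  obtain ⟨C, hC⟩ := hF.1
  refine continuous_of_uniform_approx_of_continuous fun u hu => ?_
  obtain ⟨ε, hε, hεu⟩ := Metric.mem_uniformity_dist.1 hu
  obtain ⟨K, hK, hKapprox⟩ := exists_isCompact_forall_norm_integral_sub_setIntegral_lt μ hC
    (fun f hf => hF.integrable μ hf) hε
  have hcont : Continuous fun f : F => ∫ x in K, (f : G → ℂ) x ∂μ :=
    (hF.equicontinuous.equicontinuousOn K).continuous_setIntegral continuous_subtype_val hK
      (measure_ne_top μ K) fun f => (hF.integrable μ f.2).integrableOn
  exact ⟨_, hcont, fun f => hεu (by rw [dist_eq_norm]; exact hKapprox f f.2)⟩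
end
end

section
/- Let G be a topological group, F ⊆ LUC(G) an equi-LUC set, and B ⊆ LUC(G)* a norm-bounded set. Then the set { r_n f : f ∈ F, n ∈ B }, where r_n f(s) = n(ℓ_s f), is an equi-LUC subset of LUC(G). -/
/-!
Since `(s x) (t x)⁻¹ = s t⁻¹`, one neighbourhood `U` witnessing equi-LUC for `F` at level `δ`
gives `‖ℓ_s f - ℓ_t f‖ ≤ δ` for all `f ∈ F` whenever `s t⁻¹ ∈ U`; applying a functional `n ∈ B`
then costs at most the factor `‖n‖ ≤ C`.
-/

noncomputable section
set_option linter.unusedSectionVars false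

open Filter Topology MeasureTheory BoundedContinuousFunction

section LUCSpace

variable (G : Type*) [Group G] [TopologicalSpace G] [IsTopologicalGroup G]

/-- The space `LUC(G)` of bounded left uniformly continuous complex functions on `G`,
as a subspace of the bounded continuous functions with the sup norm. -/
def LUC : Submodule ℂ (G →ᵇ ℂ) where
  carrier := {f | ∀ ε > 0, ∃ U ∈ 𝓝 (1 : G), ∀ s t : G, s * t⁻¹ ∈ U → ‖f s - f t‖ < ε}
  zero_mem' := fun ε hε => ⟨Set.univ, Filter.univ_mem, fun s t _ => by simpa using hε⟩
  add_mem' := by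
    intro f g hf hg ε hε
    obtain ⟨U, hU, hUf⟩ := hf (ε / 2) (by linarith)
    obtain ⟨V, hV, hVg⟩ := hg (ε / 2) (by linarith)
    refine ⟨U ∩ V, Filter.inter_mem hU hV, fun s t hst => ?_⟩
    have h1 := hUf s t hst.1
    have h2 := hVg s t hst.2
    have e : (f + g) s - (f + g) t = (f s - f t) + (g s - g t) := by
      simp only [BoundedContinuousFunction.coe_add, Pi.add_apply]; ring
    calc ‖(f + g) s - (f + g) t‖ ≤ ‖f s - f t‖ + ‖g s - g t‖ := by
          rw [e]; exact norm_add_le _ _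
      _ < ε := by linarith
  smul_mem' := by
    intro c f hf ε hε
    obtain ⟨U, hU, hUf⟩ := hf (ε / (‖c‖ + 1)) (by positivity)
    refine ⟨U, hU, fun s t hst => ?_⟩
    have h := hUf s t hst
    have e : (c • f) s - (c • f) t = c * (f s - f t) := by
      simp only [BoundedContinuousFunction.coe_smul, Pi.smul_apply, smul_eq_mul]; ring
    rw [e, norm_mul]
    calc ‖c‖ * ‖f s - f t‖ ≤ ‖c‖ * (ε / (‖c‖ + 1)) :=
          mul_le_mul_of_nonneg_left h.le (norm_nonneg c)
      _ < (‖c‖ + 1) * (ε / (‖c‖ + 1)) :=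
          mul_lt_mul_of_pos_right (by linarith) (by positivity)
      _ = ε := by field_simp

/-- Equi-LUC subsets of the space `LUC(G)`. -/
def EquiLUC (F : Set ↥(LUC G)) : Prop :=
  (∃ C, ∀ f ∈ F, ‖f‖ ≤ C) ∧
    ∀ ε > 0, ∃ U ∈ 𝓝 (1 : G), ∀ f ∈ F, ∀ s t : G,
      s * t⁻¹ ∈ U → ‖(f : G →ᵇ ℂ) s - (f : G →ᵇ ℂ) t‖ < ε

variable {G}

lemma lTrans_mem (s : G) {f : G →ᵇ ℂ} (hf : f ∈ LUC G) :
    f.compContinuous ⟨fun x => s * x, by continuity⟩ ∈ LUC G := by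
  intro ε hε
  obtain ⟨U, hU, hUf⟩ := hf ε hε
  refine ⟨(fun u => s * u * s⁻¹) ⁻¹' U, ?_, ?_⟩
  · have hc : ContinuousAt (fun u : G => s * u * s⁻¹) 1 := by fun_prop
    exact hc.preimage_mem_nhds (by simpa using hU)
  · intro x y hxy
    have h' : (s * x) * (s * y)⁻¹ ∈ U := by
      have h'' : s * (x * y⁻¹) * s⁻¹ ∈ U := hxy
      simpa [mul_inv_rev, mul_assoc] using h''
    exact hUf (s * x) (s * y) h'

/-- Left translation `ℓ_s f (x) = f (s x)` on `LUC(G)`. -/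
def lTrans (s : G) (f : ↥(LUC G)) : ↥(LUC G) :=
  ⟨(f : G →ᵇ ℂ).compContinuous ⟨fun x => s * x, by continuity⟩, lTrans_mem s f.2⟩

@[simp] lemma lTrans_apply (s : G) (f : ↥(LUC G)) (x : G) :
    ((lTrans s f : ↥(LUC G)) : G →ᵇ ℂ) x = (f : G →ᵇ ℂ) (s * x) := rfl

variable (G) in
/-- The dual Banach space `LUC(G)*`. -/
abbrev LUCDual := StrongDual ℂ ↥(LUC G)

lemma lTrans_norm_le (s : G) (f : ↥(LUC G)) : ‖lTrans s f‖ ≤ ‖f‖ :=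
  BoundedContinuousFunction.norm_compContinuous_le _ _

lemma lTrans_add (s : G) (f g : ↥(LUC G)) :
    lTrans s (f + g) = lTrans s f + lTrans s g := by
  apply Subtype.ext; ext x; rfl

lemma lTrans_smul (s : G) (c : ℂ) (f : ↥(LUC G)) :
    lTrans s (c • f) = c • lTrans s f := by
  apply Subtype.ext; ext x; rfl

lemma luccond_continuous {g : G → ℂ}
    (h : ∀ ε > 0, ∃ U ∈ 𝓝 (1 : G), ∀ s t : G, s * t⁻¹ ∈ U → ‖g s - g t‖ < ε) :
    Continuous g := by
  rw [continuous_iff_continuousAt]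
  intro t
  rw [ContinuousAt, Metric.tendsto_nhds]
  intro ε hε
  obtain ⟨U, hU, hUf⟩ := h ε hε
  have hmem : {s : G | s * t⁻¹ ∈ U} ∈ 𝓝 t := by
    have hc : ContinuousAt (fun s : G => s * t⁻¹) t := by fun_prop
    exact hc.preimage_mem_nhds (by simpa using hU)
  filter_upwards [hmem] with s hs
  rw [dist_eq_norm]
  exact hUf s t hs

lemma rAct_cond (n : LUCDual G) (f : ↥(LUC G)) :
    ∀ ε > 0, ∃ U ∈ 𝓝 (1 : G), ∀ s t : G, s * t⁻¹ ∈ U →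
      ‖n (lTrans s f) - n (lTrans t f)‖ < ε := by
  intro ε hε
  set δ := ε / (2 * (‖n‖ + 1)) with hδdef
  have hδ : 0 < δ := by positivity
  obtain ⟨U, hU, hUf⟩ := f.2 δ hδ
  refine ⟨U, hU, fun s t hst => ?_⟩
  have hdiff : ‖lTrans s f - lTrans t f‖ ≤ δ := by
    have : ‖((lTrans s f : ↥(LUC G)) : G →ᵇ ℂ) - ((lTrans t f : ↥(LUC G)) : G →ᵇ ℂ)‖ ≤ δ := by
      apply BoundedContinuousFunction.norm_le hδ.le |>.2
      intro x
      have hx : (s * x) * (t * x)⁻¹ ∈ U := by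
        simpa [mul_inv_rev, mul_assoc] using hst
      simpa using (hUf (s * x) (t * x) hx).le
    exact this
  calc ‖n (lTrans s f) - n (lTrans t f)‖ = ‖n (lTrans s f - lTrans t f)‖ := by
        rw [map_sub]
    _ ≤ ‖n‖ * ‖lTrans s f - lTrans t f‖ := n.le_opNorm _
    _ ≤ ‖n‖ * δ := mul_le_mul_of_nonneg_left hdiff (norm_nonneg n)
    _ < (‖n‖ + 1) * δ := mul_lt_mul_of_pos_right (by linarith) hδ
    _ = ε / 2 := by rw [hδdef]; field_simp
    _ < ε := by linarith

/-- The function `r_n f : s ↦ n (ℓ_s f)`, as an element of `LUC(G)`. -/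
def rAct (n : LUCDual G) (f : ↥(LUC G)) : ↥(LUC G) :=
  ⟨BoundedContinuousFunction.ofNormedAddCommGroup (fun s => n (lTrans s f))
      (luccond_continuous (rAct_cond n f))
      (‖n‖ * ‖f‖)
      (fun s => by
        calc ‖n (lTrans s f)‖ ≤ ‖n‖ * ‖lTrans s f‖ := n.le_opNorm _
          _ ≤ ‖n‖ * ‖f‖ := mul_le_mul_of_nonneg_left (lTrans_norm_le s f) (norm_nonneg n)),
   fun ε hε => by
      obtain ⟨U, hU, h⟩ := rAct_cond n f ε hε
      exact ⟨U, hU, fun s t hst => h s t hst⟩⟩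

@[simp] lemma rAct_apply (n : LUCDual G) (f : ↥(LUC G)) (s : G) :
    ((rAct n f : ↥(LUC G)) : G →ᵇ ℂ) s = n (lTrans s f) := rfl

lemma rAct_norm_le (n : LUCDual G) (f : ↥(LUC G)) : ‖rAct n f‖ ≤ ‖n‖ * ‖f‖ := by
  have h0 : (0 : ℝ) ≤ ‖n‖ * ‖f‖ := by positivity
  show ‖((rAct n f : ↥(LUC G)) : G →ᵇ ℂ)‖ ≤ ‖n‖ * ‖f‖
  refine (BoundedContinuousFunction.norm_le h0).2 fun s => ?_
  calc ‖n (lTrans s f)‖ ≤ ‖n‖ * ‖lTrans s f‖ := n.le_opNorm _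
    _ ≤ ‖n‖ * ‖f‖ := mul_le_mul_of_nonneg_left (lTrans_norm_le s f) (norm_nonneg n)

lemma rAct_add (n : LUCDual G) (f g : ↥(LUC G)) :
    rAct n (f + g) = rAct n f + rAct n g := by
  apply Subtype.ext
  ext s
  simp [rAct_apply, lTrans_add, map_add]

lemma rAct_smul (n : LUCDual G) (c : ℂ) (f : ↥(LUC G)) :
    rAct n (c • f) = c • rAct n f := by
  apply Subtype.ext
  ext s
  simp [rAct_apply, lTrans_smul, _root_.map_smul]

/-- Convolution on `LUC(G)*`: `(m ∗ n)(f) = m (r_n f)`. -/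
def conv (m n : LUCDual G) : LUCDual G :=
  LinearMap.mkContinuous
    { toFun := fun f => m (rAct n f)
      map_add' := by
        intro f g
        show m (rAct n (f + g)) = m (rAct n f) + m (rAct n g)
        rw [rAct_add, map_add]
      map_smul' := by
        intro c f
        show m (rAct n (c • f)) = c • m (rAct n f)
        rw [rAct_smul, _root_.map_smul] }
    (‖m‖ * ‖n‖)
    (fun f => by
      calc ‖m (rAct n f)‖ ≤ ‖m‖ * ‖rAct n f‖ := m.le_opNorm _
        _ ≤ ‖m‖ * (‖n‖ * ‖f‖) :=
            mul_le_mul_of_nonneg_left (rAct_norm_le n f) (norm_nonneg m)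
        _ = ‖m‖ * ‖n‖ * ‖f‖ := by ring)

@[simp] lemma conv_apply (m n : LUCDual G) (f : ↥(LUC G)) :
    conv m n f = m (rAct n f) := rfl

variable (G) in
/-- Convergence of a net in the UEB topology on `LUC(G)*`:
uniform convergence on every equi-LUC set. -/
def UEBTendsto {ι : Type*} (l : Filter ι) (m : ι → LUCDual G) (m₀ : LUCDual G) : Prop :=
  ∀ F : Set ↥(LUC G), EquiLUC G F → ∀ ε > 0, ∀ᶠ i in l, ∀ f ∈ F, ‖m i f - m₀ f‖ < ε

variable (G) in
/-- The UEB topology on `LUC(G)*`: the topology of uniform convergence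
on the equi-LUC subsets of `LUC(G)`. -/
def UEBTop : TopologicalSpace (LUCDual G) :=
  ⨅ F : {F : Set ↥(LUC G) // EquiLUC G F},
    TopologicalSpace.induced
      (fun m => UniformFun.ofFun (fun f : F.1 => m f.1) : LUCDual G → UniformFun F.1 ℂ)
      inferInstance

end LUCSpace

section RightAction

variable {G : Type*} [Group G] [TopologicalSpace G] [IsTopologicalGroup G]

lemma norm_lTrans_sub_lTrans_le {f : ↥(LUC G)} {U : Set G} {δ : ℝ} (hδ : 0 ≤ δ)
    (hf : ∀ x y : G, x * y⁻¹ ∈ U → ‖(f : G →ᵇ ℂ) x - (f : G →ᵇ ℂ) y‖ < δ)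
    {s t : G} (hst : s * t⁻¹ ∈ U) :
    ‖lTrans s f - lTrans t f‖ ≤ δ := by
  refine (BoundedContinuousFunction.norm_le hδ).2 fun x => (hf (s * x) (t * x) ?_).le
  simpa [mul_inv_rev, mul_assoc] using hst

lemma norm_apply_lTrans_le (n : LUCDual G) (f : ↥(LUC G)) (s : G) :
    ‖n (lTrans s f)‖ ≤ ‖n‖ * ‖f‖ :=
  (n.le_opNorm _).trans (mul_le_mul_of_nonneg_left (lTrans_norm_le s f) (norm_nonneg n))

lemma exists_norm_apply_lTrans_le {F : Set ↥(LUC G)} {B : Set (LUCDual G)}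
    (hF : ∃ C, ∀ f ∈ F, ‖f‖ ≤ C) (hB : ∃ C, ∀ n ∈ B, ‖n‖ ≤ C) :
    ∃ C, ∀ f ∈ F, ∀ n ∈ B, ∀ s, ‖n (lTrans s f)‖ ≤ C := by
  obtain ⟨CF, hCF⟩ := hF
  obtain ⟨CB, hCB⟩ := hB
  refine ⟨max CB 0 * CF, fun f hf n hn s => (norm_apply_lTrans_le n f s).trans ?_⟩
  exact mul_le_mul ((hCB n hn).trans (le_max_left _ _)) (hCF f hf) (norm_nonneg f)
    (le_max_right _ _)

lemma exists_nhds_norm_apply_lTrans_sub_lt {F : Set ↥(LUC G)} {B : Set (LUCDual G)}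
    (hF : ∀ ε > 0, ∃ U ∈ 𝓝 (1 : G), ∀ f ∈ F, ∀ s t : G,
      s * t⁻¹ ∈ U → ‖(f : G →ᵇ ℂ) s - (f : G →ᵇ ℂ) t‖ < ε)
    (hB : ∃ C, ∀ n ∈ B, ‖n‖ ≤ C) {ε : ℝ} (hε : 0 < ε) :
    ∃ U ∈ 𝓝 (1 : G), ∀ f ∈ F, ∀ n ∈ B, ∀ s t : G,
      s * t⁻¹ ∈ U → ‖n (lTrans s f) - n (lTrans t f)‖ < ε := by
  obtain ⟨C, hC⟩ := hB
  set M := max C 0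
  have hM : 0 ≤ M := le_max_right _ _
  have hδ : 0 < ε / (M + 1) := by positivity
  obtain ⟨U, hU, hUF⟩ := hF _ hδ
  refine ⟨U, hU, fun f hf n hn s t hst => ?_⟩
  calc ‖n (lTrans s f) - n (lTrans t f)‖ = ‖n (lTrans s f - lTrans t f)‖ := by rw [map_sub]
    _ ≤ ‖n‖ * ‖lTrans s f - lTrans t f‖ := n.le_opNorm _
    _ ≤ M * (ε / (M + 1)) :=
        mul_le_mul ((hC n hn).trans (le_max_left _ _))
          (norm_lTrans_sub_lTrans_le hδ.le (hUF f hf) hst) (norm_nonneg _) hM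
    _ < ε := by rw [mul_div_assoc', div_lt_iff₀ (by positivity)]; linarith

end RightAction

/-- **Lemma (paper Lemma 5.3).** If `F ⊆ LUC(G)` is equi-LUC and `B ⊆ LUC(G)*` is
norm-bounded, then `{ r_n f : f ∈ F, n ∈ B }`, where `r_n f (s) = n (ℓ_s f)`, is an
equi-LUC set of functions on `G`. -/
theorem equiLUC_rAct
    (G : Type*) [Group G] [TopologicalSpace G] [IsTopologicalGroup G]
    (F : Set ↥(LUC G)) (hF : EquiLUC G F)
    (B : Set (LUCDual G)) (hB : ∃ C, ∀ n ∈ B, ‖n‖ ≤ C) :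
    EquiLUCFun G {g : G → ℂ | ∃ f ∈ F, ∃ n ∈ B, g = fun s => n (lTrans s f)} := by
  obtain ⟨hF_bdd, hF_equi⟩ := hF
  refine ⟨?_, fun ε hε => ?_⟩
  · obtain ⟨C, hC⟩ := exists_norm_apply_lTrans_le hF_bdd hB
    exact ⟨C, by rintro g ⟨f, hf, n, hn, rfl⟩; exact hC f hf n hn⟩
  · obtain ⟨U, hU, hUF⟩ := exists_nhds_norm_apply_lTrans_sub_lt hF_equi hB hε
    exact ⟨U, hU, by rintro g ⟨f, hf, n, hn, rfl⟩; exact hUF f hf n hn⟩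
end
end

section
/- For every SIN group G, the convolution map (m, n) ↦ m ∗ n is jointly continuous on norm-bounded subsets of LUC(G)* when LUC(G)* carries the UEB topology. -/
noncomputable section
set_option linter.unusedSectionVars false

open Filter Topology MeasureTheory BoundedContinuousFunction

namespace LUC

variable {G : Type*} [Group G] [TopologicalSpace G] [IsTopologicalGroup G]

lemma norm_le {g : LUC G} {δ : ℝ} (hδ : 0 ≤ δ) : ‖g‖ ≤ δ ↔ ∀ x, ‖(g : G →ᵇ ℂ) x‖ ≤ δ :=
  BoundedContinuousFunction.norm_le hδ

lemma norm_lTrans_sub_lTrans_le {f : LUC G} {U : Set G} {δ : ℝ} (hδ : 0 ≤ δ)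
    (hf : ∀ x y, x * y⁻¹ ∈ U → ‖(f : G →ᵇ ℂ) x - (f : G →ᵇ ℂ) y‖ < δ) {s t : G}
    (hst : s * t⁻¹ ∈ U) : ‖lTrans s f - lTrans t f‖ ≤ δ :=
  (norm_le hδ).2 fun x => by
    simpa using (hf (s * x) (t * x) (by simpa [mul_assoc] using hst)).le

end LUC

section EquiLUC

variable {G : Type*} [Group G] [TopologicalSpace G] [IsTopologicalGroup G]

lemma equiLUC_image2_rAct {F : Set (LUC G)} (hF : EquiLUC G F) (C : ℝ) :
    EquiLUC G (Set.image2 rAct {n | ‖n‖ ≤ C} F) := by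
  obtain ⟨⟨D, hD⟩, hFe⟩ := hF
  constructor
  · refine ⟨C * D, ?_⟩
    rintro _ ⟨n, hn, f, hf, rfl⟩
    exact (rAct_norm_le n f).trans
      (mul_le_mul hn (hD f hf) (norm_nonneg f) ((norm_nonneg n).trans hn))
  · intro ε hε
    have hδ : 0 < ε / (|C| + 1) := by positivity
    obtain ⟨U, hU, hUe⟩ := hFe _ hδ
    refine ⟨U, hU, ?_⟩
    rintro _ ⟨n, hn, f, hf, rfl⟩ s t hst
    calc ‖((rAct n f : LUC G) : G →ᵇ ℂ) s - ((rAct n f : LUC G) : G →ᵇ ℂ) t‖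
        = ‖n (lTrans s f - lTrans t f)‖ := by rw [rAct_apply, rAct_apply, map_sub]
      _ ≤ ‖n‖ * ‖lTrans s f - lTrans t f‖ := n.le_opNorm _
      _ ≤ |C| * (ε / (|C| + 1)) :=
          mul_le_mul (hn.trans (le_abs_self C))
            (LUC.norm_lTrans_sub_lTrans_le hδ.le (hUe f hf) hst) (norm_nonneg _) (abs_nonneg C)
      _ < (|C| + 1) * (ε / (|C| + 1)) := by gcongr; linarith
      _ = ε := by field_simp

/-- This is where the SIN property enters: an invariant neighbourhood `V` satisfies
`(s x) (s y)⁻¹ = s (x y⁻¹) s⁻¹ ∈ V` whenever `x y⁻¹ ∈ V`, uniformly in `s`. -/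
lemma equiLUC_image2_lTrans (hSIN : IsSIN G) {F : Set (LUC G)} (hF : EquiLUC G F) :
    EquiLUC G (Set.image2 lTrans Set.univ F) := by
  obtain ⟨⟨D, hD⟩, hFe⟩ := hF
  constructor
  · refine ⟨D, ?_⟩
    rintro _ ⟨s, -, f, hf, rfl⟩
    exact (lTrans_norm_le s f).trans (hD f hf)
  · intro ε hε
    obtain ⟨U, hU, hUe⟩ := hFe ε hε
    obtain ⟨V, hV, hVU, hVconj⟩ := hSIN U hU
    refine ⟨V, hV, ?_⟩
    rintro _ ⟨s, -, f, hf, rfl⟩ x y hxy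
    have hconj : (s * x) * (s * y)⁻¹ ∈ U :=
      hVU (by simpa [mul_assoc] using hVconj s (x * y⁻¹) hxy)
    simpa using hUe f hf (s * x) (s * y) hconj

end EquiLUC

section UEB

variable {G : Type*} [Group G] [TopologicalSpace G] [IsTopologicalGroup G]
  {ι : Type*} {l : Filter ι}

lemma tendsto_UEBTop_iff {m : ι → LUCDual G} {m₀ : LUCDual G} :
    Tendsto m l (@nhds _ (UEBTop G) m₀) ↔ UEBTendsto G l m m₀ := by
  rw [UEBTop, nhds_iInf, tendsto_iInf]
  simp only [nhds_induced, tendsto_comap_iff, UniformFun.tendsto_iff_tendstoUniformly,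
    Metric.tendstoUniformly_iff, Subtype.forall, Function.comp_apply, UniformFun.toFun_ofFun,
    dist_comm (m₀ _), dist_eq_norm, UEBTendsto]

lemma UEBTendsto.tendstoUniformlyOn_rAct (hSIN : IsSIN G) {n : ι → LUCDual G}
    {n₀ : LUCDual G} (hn : UEBTendsto G l n n₀) {F : Set (LUC G)} (hF : EquiLUC G F) :
    TendstoUniformlyOn (fun i => rAct (n i)) (rAct n₀) l F := by
  rw [Metric.tendstoUniformlyOn_iff]
  intro ε hε
  filter_upwards [hn _ (equiLUC_image2_lTrans hSIN hF) (ε / 2) (half_pos hε)] with i hi f hf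
  rw [dist_eq_norm]
  refine lt_of_le_of_lt ((LUC.norm_le (half_pos hε).le).2 fun s => ?_) (half_lt_self hε)
  simpa [norm_sub_rev] using (hi _ (Set.mem_image2_of_mem (Set.mem_univ s) hf)).le

/-- `m (r_n f) - m₀ (r_{n₀} f)` splits as `(m - m₀) (r_n f) + m₀ (r_n f - r_{n₀} f)`: the first
term is small because the `r_n f` with `‖n‖ ≤ C` form an equi-LUC set, the second because
`r_n f → r_{n₀} f` in norm, uniformly on equi-LUC sets. -/
lemma UEBTendsto.conv (hSIN : IsSIN G) {m n : ι → LUCDual G} {m₀ n₀ : LUCDual G}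
    (hm : UEBTendsto G l m m₀) (hn : UEBTendsto G l n n₀) {C : ℝ}
    (hC : ∀ᶠ i in l, ‖n i‖ ≤ C) :
    UEBTendsto G l (fun i => conv (m i) (n i)) (conv m₀ n₀) := by
  intro F hF ε hε
  have hfirst := hm _ (equiLUC_image2_rAct hF C) (ε / 2) (half_pos hε)
  have hsecond := Metric.tendstoUniformlyOn_iff.1
    (m₀.uniformContinuous.comp_tendstoUniformlyOn (hn.tendstoUniformlyOn_rAct hSIN hF))
    (ε / 2) (half_pos hε)
  filter_upwards [hfirst, hsecond, hC] with i hmi hni hnC f hf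
  have h₁ := hmi _ (Set.mem_image2_of_mem hnC hf)
  have h₂ := hni f hf
  rw [dist_comm, dist_eq_norm, Function.comp_apply, Function.comp_apply] at h₂
  calc _ = ‖(m i (rAct (n i) f) - m₀ (rAct (n i) f)) + (m₀ (rAct (n i) f) - m₀ (rAct n₀ f))‖ := by
        rw [conv_apply, conv_apply, sub_add_sub_cancel]
    _ ≤ ‖m i (rAct (n i) f) - m₀ (rAct (n i) f)‖ + ‖m₀ (rAct (n i) f) - m₀ (rAct n₀ f)‖ :=
        norm_add_le _ _
    _ < ε := by linarith

end UEB

theorem conv_UEB_jointly_continuous_on_bounded_of_SIN_general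
    (G : Type*) [Group G] [TopologicalSpace G] [IsTopologicalGroup G]
    (hSIN : IsSIN G)
    (B₁ B₂ : Set (LUCDual G))
    (hb₂ : ∃ C, ∀ m ∈ B₂, ‖m‖ ≤ C) :
    @ContinuousOn (LUCDual G × LUCDual G) (LUCDual G)
      (@instTopologicalSpaceProd _ _ (UEBTop G) (UEBTop G)) (UEBTop G)
      (fun p => conv p.1 p.2) (B₁ ×ˢ B₂) := by
  let _ : TopologicalSpace (LUCDual G) := UEBTop G
  obtain ⟨C, hC⟩ := hb₂
  intro p _
  have hfst := tendsto_UEBTop_iff.1 (continuous_fst.continuousWithinAt (s := B₁ ×ˢ B₂) (x := p))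
  have hsnd := tendsto_UEBTop_iff.1 (continuous_snd.continuousWithinAt (s := B₁ ×ˢ B₂) (x := p))
  have hbdd : ∀ᶠ q in 𝓝[B₁ ×ˢ B₂] p, ‖q.2‖ ≤ C :=
    eventually_mem_nhdsWithin.mono fun q hq => hC q.2 hq.2
  exact tendsto_UEBTop_iff.2 (hfst.conv hSIN hsnd hbdd)

/-- **Corollary (paper Cor 5.6).** For every SIN group, convolution is jointly UEB
continuous on norm-bounded subsets of `LUC(G)*`. -/
theorem conv_UEB_jointly_continuous_on_bounded_of_SIN
    (G : Type*) [Group G] [TopologicalSpace G] [IsTopologicalGroup G]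
    (hSIN : IsSIN G)
    (B₁ B₂ : Set (LUCDual G))
    (hb₁ : ∃ C, ∀ m ∈ B₁, ‖m‖ ≤ C) (hb₂ : ∃ C, ∀ m ∈ B₂, ‖m‖ ≤ C) :
    @ContinuousOn (LUCDual G × LUCDual G) (LUCDual G)
      (@instTopologicalSpaceProd _ _ (UEBTop G) (UEBTop G)) (UEBTop G)
      (fun p => conv p.1 p.2) (B₁ ×ˢ B₂) :=
  conv_UEB_jointly_continuous_on_bounded_of_SIN_general G hSIN B₁ B₂ hb₂
end
end
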